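/- arXiv:1710.07006 — 3 statements merged into one kernel-verified Lean document; each statement's English description precedes it below -/
import Mathlib

section
/- Let Ω be a symmetric p×p real matrix with max_j Σ_{i : |i-j| ≥ k} |ω_{ij}| ≤ M k^{-α} for all positive integers k, where M > 0, α > 0. Let Ω_B be the matrix with entries ω_{ij}·(1 − v_{ij}), where v_{ij} is the tapering coefficient with bandwidth k (v_{ij}=1 for |i-j|<k/2, linearly decaying to 0 at |i-j|=k). Then the spectral norm satisfies ‖Ω_B‖² ≤ M² 2^{2α} k^{-2α}. -/
open Finset

/-- Spectral (operator) norm of a real matrix, viewed as an operator between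
Euclidean spaces. -/
noncomputable def specNorm {m n : Type*} [Fintype m] [Fintype n] [DecidableEq n]
    (A : Matrix m n ℝ) : ℝ :=
  ‖LinearMap.toContinuousLinearMap (Matrix.toEuclideanLin A)‖

lemma schur_test {p : ℕ} (A : Matrix (Fin p) (Fin p) ℝ) (C : ℝ) (hC : 0 ≤ C)
    (hrow : ∀ i, ∑ j, |A i j| ≤ C) (hcol : ∀ j, ∑ i, |A i j| ≤ C) :
    specNorm A ≤ C := by
  unfold specNorm
  apply ContinuousLinearMap.opNorm_le_bound _ hC
  intro x
  rw [LinearMap.coe_toContinuousLinearMap']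
  have hx : ‖x‖ = Real.sqrt (∑ j, (x j)^2 : ℝ) := by
    rw [EuclideanSpace.norm_eq]
    congr 1; apply Finset.sum_congr rfl; intros; rw [Real.norm_eq_abs, sq_abs]
  have happ : ∀ i, (Matrix.toEuclideanLin A x) i = ∑ j, A i j * x j := by
    intro i
    simp [Matrix.toEuclideanLin_apply, Matrix.mulVec, dotProduct]
  have key : ∀ i, (∑ j, A i j * x j)^2 ≤ C * ∑ j, |A i j| * (x j)^2 := by
    intro i
    have h1 : (∑ j, A i j * x j)^2 ≤ (∑ j, |A i j| * |x j|)^2 := by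
      rw [← sq_abs (∑ j, A i j * x j)]
      apply pow_le_pow_left₀ (abs_nonneg _)
      calc |∑ j, A i j * x j| ≤ ∑ j, |A i j * x j| := Finset.abs_sum_le_sum_abs _ _
        _ = ∑ j, |A i j| * |x j| := by simp [abs_mul]
    have h2 : (∑ j, |A i j| * |x j|)^2
        ≤ (∑ j, Real.sqrt |A i j| ^ 2) * (∑ j, (Real.sqrt |A i j| * |x j|) ^ 2) := by
      have := sum_mul_sq_le_sq_mul_sq Finset.univ (fun j => Real.sqrt |A i j|)
        (fun j => Real.sqrt |A i j| * |x j|)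
      calc (∑ j, |A i j| * |x j|)^2
          = (∑ j, Real.sqrt |A i j| * (Real.sqrt |A i j| * |x j|))^2 := by
            congr 1; apply Finset.sum_congr rfl; intro j _
            rw [← mul_assoc, Real.mul_self_sqrt (abs_nonneg _)]
        _ ≤ _ := this
    have h3 : (∑ j, Real.sqrt |A i j| ^ 2) = ∑ j, |A i j| := by
      apply Finset.sum_congr rfl; intro j _; exact Real.sq_sqrt (abs_nonneg _)
    have h4 : (∑ j, (Real.sqrt |A i j| * |x j|) ^ 2) = ∑ j, |A i j| * (x j)^2 := by
      apply Finset.sum_congr rfl; intro j _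
      rw [mul_pow, Real.sq_sqrt (abs_nonneg _), sq_abs]
    calc (∑ j, A i j * x j)^2 ≤ _ := h1.trans h2
      _ = (∑ j, |A i j|) * ∑ j, |A i j| * (x j)^2 := by rw [h3, h4]
      _ ≤ C * ∑ j, |A i j| * (x j)^2 := by
          apply mul_le_mul_of_nonneg_right (hrow i)
          exact Finset.sum_nonneg fun j _ => mul_nonneg (abs_nonneg _) (sq_nonneg _)
  have hsum : ∑ i, ((Matrix.toEuclideanLin A x) i)^2 ≤ C^2 * ∑ j, (x j)^2 := by
    calc ∑ i, ((Matrix.toEuclideanLin A x) i)^2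
        = ∑ i, (∑ j, A i j * x j)^2 := by
          apply Finset.sum_congr rfl; intro i _; rw [happ]
      _ ≤ ∑ i, C * ∑ j, |A i j| * (x j)^2 := Finset.sum_le_sum fun i _ => key i
      _ = C * ∑ j, (∑ i, |A i j|) * (x j)^2 := by
          rw [← Finset.mul_sum, Finset.sum_comm]
          congr 1; apply Finset.sum_congr rfl; intro j _; rw [Finset.sum_mul]
      _ ≤ C * ∑ j, C * (x j)^2 := by
          apply mul_le_mul_of_nonneg_left _ hC
          apply Finset.sum_le_sum; intro j _
          exact mul_le_mul_of_nonneg_right (hcol j) (sq_nonneg _)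
      _ = C^2 * ∑ j, (x j)^2 := by rw [← Finset.mul_sum]; ring
  have hxnorm : ‖Matrix.toEuclideanLin A x‖
      = Real.sqrt (∑ i, ((Matrix.toEuclideanLin A x) i)^2) := by
    rw [EuclideanSpace.norm_eq]
    congr 1; apply Finset.sum_congr rfl; intros; rw [Real.norm_eq_abs, sq_abs]
  rw [hxnorm, hx]
  calc Real.sqrt (∑ i, ((Matrix.toEuclideanLin A x) i)^2)
      ≤ Real.sqrt (C^2 * ∑ j, (x j)^2) := Real.sqrt_le_sqrt hsum
    _ = C * Real.sqrt (∑ j, (x j)^2) := by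
        rw [Real.sqrt_mul (sq_nonneg _), Real.sqrt_sq hC]

/-- If `Ω` is a symmetric `p×p` matrix with bandable decay
`max_j Σ_{i : |i-j| ≥ k'} |ω_{ij}| ≤ M k'^{-α}` for every positive integer `k'`,
and `Ω_B` has entries `ω_{ij}(1 - v_{ij})` where `v` is the tapering coefficient with
(even) bandwidth `k`, then `‖Ω_B‖² ≤ M² 2^{2α} k^{-2α}`. -/
theorem outside_taper_bound (p : ℕ) (Ω : Matrix (Fin p) (Fin p) ℝ) (hsymm : Ω.IsSymm)
    (M α : ℝ) (hM : 0 < M) (hα : 0 < α)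
    (hband : ∀ k' : ℕ, 0 < k' → ∀ j : Fin p,
      ∑ i ∈ univ.filter (fun i : Fin p => (k' : ℤ) ≤ |(i : ℤ) - (j : ℤ)|), |Ω i j|
        ≤ M * (k' : ℝ) ^ (-α))
    (k : ℕ) (hk : 0 < k) (hke : Even k) :
    specNorm (Matrix.of fun i j : Fin p =>
        Ω i j * (1 -
          (if |(i : ℤ) - (j : ℤ)| < (k : ℤ) / 2 then (1 : ℝ)
            else if |(i : ℤ) - (j : ℤ)| < (k : ℤ) then
              ((k : ℝ) - (|(i : ℤ) - (j : ℤ)| : ℤ)) / ((k : ℝ) / 2)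
            else 0))) ^ 2
      ≤ M ^ 2 * (2 : ℝ) ^ (2 * α) * (k : ℝ) ^ (-(2 * α)) := by
  obtain ⟨m, hm⟩ := hke
  have hm0 : 0 < m := by omega
  set B : Matrix (Fin p) (Fin p) ℝ := Matrix.of fun i j : Fin p =>
        Ω i j * (1 -
          (if |(i : ℤ) - (j : ℤ)| < (k : ℤ) / 2 then (1 : ℝ)
            else if |(i : ℤ) - (j : ℤ)| < (k : ℤ) then
              ((k : ℝ) - (|(i : ℤ) - (j : ℤ)| : ℤ)) / ((k : ℝ) / 2)
            else 0)) with hB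
  have hk2 : (k : ℤ) / 2 = (m : ℤ) := by omega
  have hBle : ∀ i j : Fin p, |B i j| ≤
      if (m : ℤ) ≤ |(i : ℤ) - (j : ℤ)| then |Ω i j| else 0 := by
    intro i j
    rw [hB]
    simp only [Matrix.of_apply, hk2]
    set d : ℤ := |(i : ℤ) - (j : ℤ)| with hd
    have hd0 : (0 : ℤ) ≤ d := abs_nonneg _
    have hkpos : (0:ℝ) < (k:ℝ)/2 := by positivity
    split_ifs with h1 h2 h3 h4 h5 <;> try omega
    · simp
    · rw [abs_mul]
      have hdk : (d:ℝ) ≤ (k:ℝ) := by exact_mod_cast h3.le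
      have hd0' : (0:ℝ) ≤ (d:ℝ) := by exact_mod_cast hd0
      have hvnn : (0:ℝ) ≤ ((k : ℝ) - (d : ℤ)) / ((k : ℝ) / 2) :=
        div_nonneg (by push_cast; linarith) hkpos.le
      have hvle : ((k : ℝ) - (d : ℤ)) / ((k : ℝ) / 2) ≤ 2 := by
        rw [div_le_iff₀ hkpos]; push_cast; linarith
      have habs : |1 - ((k : ℝ) - (d : ℤ)) / ((k : ℝ) / 2)| ≤ 1 := by
        rw [abs_le]; constructor <;> linarith
      calc |Ω i j| * |1 - ((k : ℝ) - (d : ℤ)) / ((k : ℝ) / 2)|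
          ≤ |Ω i j| * 1 := mul_le_mul_of_nonneg_left habs (abs_nonneg _)
        _ = |Ω i j| := mul_one _
    · simp
  set C : ℝ := M * (m : ℝ) ^ (-α) with hCdef
  have hC : 0 ≤ C := by positivity
  have hcol : ∀ j, ∑ i, |B i j| ≤ C := by
    intro j
    calc ∑ i, |B i j|
        ≤ ∑ i : Fin p, (if (m : ℤ) ≤ |(i : ℤ) - (j : ℤ)| then |Ω i j| else 0) :=
          Finset.sum_le_sum fun i _ => hBle i j
      _ = ∑ i ∈ univ.filter (fun i : Fin p => (m : ℤ) ≤ |(i : ℤ) - (j : ℤ)|), |Ω i j| := by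
          rw [Finset.sum_filter]
      _ ≤ C := hband m hm0 j
  have hBsymm : ∀ i j, B i j = B j i := by
    intro i j
    rw [hB]
    simp only [Matrix.of_apply]
    rw [hsymm.apply, abs_sub_comm (i : ℤ) (j : ℤ)]
  have hrow : ∀ i, ∑ j, |B i j| ≤ C := by
    intro i
    calc ∑ j, |B i j| = ∑ j, |B j i| := by
          apply Finset.sum_congr rfl; intro j _; rw [hBsymm]
      _ ≤ C := hcol i
  have hspec : specNorm B ≤ C := schur_test B C hC hrow hcol
  have hspec0 : 0 ≤ specNorm B := norm_nonneg _
  have hCsq : C ^ 2 = M ^ 2 * (2 : ℝ) ^ (2 * α) * (k : ℝ) ^ (-(2 * α)) := by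
    have hmr : (m : ℝ) = (k : ℝ) / 2 := by
      have : (k : ℝ) = 2 * (m : ℝ) := by push_cast [hm]; ring
      rw [this]; ring
    have hm' : (0:ℝ) < (m:ℝ) := by exact_mod_cast hm0
    have h1 : ((m : ℝ) ^ (-α)) ^ 2 = (m : ℝ) ^ (-(2 * α)) := by
      rw [sq, ← Real.rpow_add hm']; ring_nf
    rw [hCdef, mul_pow, h1, hmr, Real.div_rpow (by positivity) (by norm_num),
      Real.rpow_neg (by norm_num : (0:ℝ) ≤ 2), div_inv_eq_mul]
    ring
  calc specNorm B ^ 2 ≤ C ^ 2 := pow_le_pow_left₀ hspec0 hspec 2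
    _ = _ := hCsq
end

section
/- Let Ω be a symmetric positive definite matrix with smallest eigenvalue at least 1/M₀ and satisfying the bandability condition max_j Σ_{i: |i-j| ≥ m} |ω_{ij}| ≤ M m^{-α}. With the decomposition of the previous Schur identity, where B₂ denotes the submatrix of Ω whose entries all satisfy |i - j| ≥ m, the correction matrix W = B₂ C⁻¹ B₂ᵀ satisfies ‖W‖ ≤ M² M₀ m^{-2α} in spectral norm. -/
/-!
The correction `W = B₂ C⁻¹ B₂ᵀ` has norm at most `‖B₂‖² ‖C⁻¹‖`. Since `Ω - M₀⁻¹ • 1` is positive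
semidefinite, so is its principal submatrix `C - M₀⁻¹ • 1`; hence the spectrum of `C` lies in
`[M₀⁻¹, ∞)` and `‖C⁻¹‖ ≤ M₀`. Every entry of `B₂` lies at distance at least `m` from the diagonal,
so by bandability (and the symmetry of `Ω`, for the rows) every row and column of `B₂` has
absolute sum at most `M m^{-α}`, and the Schur test bounds `‖B₂‖` by the same quantity.
-/

open Finset Matrix

open scoped Matrix.Norms.L2Operator

lemma Finset.sum_comp_le_sum_filter_of_injective {ι κ M : Type*} [Fintype ι] [Fintype κ]
    [AddCommMonoid M] [PartialOrder M] [IsOrderedAddMonoid M] {f : κ → M} (hf : ∀ i, 0 ≤ f i)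
    {e : ι → κ} (he : Function.Injective e) {P : κ → Prop} [DecidablePred P]
    (hP : ∀ a, P (e a)) :
    ∑ a, f (e a) ≤ ∑ i ∈ univ.filter P, f i := by
  refine (sum_map univ ⟨e, he⟩ f).symm.trans_le <|
    sum_le_sum_of_subset_of_nonneg (fun i hi => ?_) fun i _ _ => hf i
  obtain ⟨a, -, rfl⟩ := mem_map.mp hi
  exact mem_filter.mpr ⟨mem_univ _, hP a⟩

namespace Matrix

section L2OpNorm

variable {m n 𝕜 : Type*} [Fintype n] [RCLike 𝕜]

lemma norm_mulVec_apply_sq_le (A : Matrix m n 𝕜) (x : n → 𝕜) (i : m) :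
    ‖(A *ᵥ x) i‖ ^ 2 ≤ (∑ j, ‖A i j‖) * ∑ j, ‖A i j‖ * ‖x j‖ ^ 2 := by
  have htri : ‖(A *ᵥ x) i‖ ≤ ∑ j, ‖A i j‖ * ‖x j‖ := by
    simpa only [mulVec, dotProduct, norm_mul] using norm_sum_le univ fun j => A i j * x j
  calc ‖(A *ᵥ x) i‖ ^ 2 ≤ (∑ j, ‖A i j‖ * ‖x j‖) ^ 2 := by gcongr
    _ ≤ _ := sum_sq_le_sum_mul_sum_of_sq_le_mul univ (fun _ _ => norm_nonneg _)
        (fun _ _ => by positivity) fun j _ => le_of_eq (by ring)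

lemma sum_norm_mulVec_sq_le [Fintype m] (A : Matrix m n 𝕜) {R C : ℝ} (hR : 0 ≤ R)
    (hrow : ∀ i, ∑ j, ‖A i j‖ ≤ R) (hcol : ∀ j, ∑ i, ‖A i j‖ ≤ C) (x : n → 𝕜) :
    ∑ i, ‖(A *ᵥ x) i‖ ^ 2 ≤ R * C * ∑ j, ‖x j‖ ^ 2 :=
  calc ∑ i, ‖(A *ᵥ x) i‖ ^ 2 ≤ ∑ i, R * ∑ j, ‖A i j‖ * ‖x j‖ ^ 2 := by
        gcongr with i
        exact (A.norm_mulVec_apply_sq_le x i).trans (by gcongr; exact hrow i)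
    _ = R * ∑ j, (∑ i, ‖A i j‖) * ‖x j‖ ^ 2 := by
        rw [← mul_sum, sum_comm]
        simp_rw [sum_mul]
    _ ≤ R * ∑ j, C * ‖x j‖ ^ 2 := by gcongr with j; exact hcol j
    _ = R * C * ∑ j, ‖x j‖ ^ 2 := by rw [← mul_sum, mul_assoc]

/-- **Schur test**. -/
theorem l2_opNorm_le_sqrt_of_sum_norm_le [Fintype m] [DecidableEq n] (A : Matrix m n 𝕜)
    {R C : ℝ} (hR : 0 ≤ R) (hrow : ∀ i, ∑ j, ‖A i j‖ ≤ R) (hcol : ∀ j, ∑ i, ‖A i j‖ ≤ C) :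
    ‖A‖ ≤ √(R * C) := by
  rw [l2_opNorm_def]
  refine ContinuousLinearMap.opNorm_le_bound _ (Real.sqrt_nonneg _) fun x => ?_
  rw [← Real.sqrt_sq (norm_nonneg x), ← Real.sqrt_mul' _ (sq_nonneg _),
    ← Real.sqrt_sq (norm_nonneg _)]
  refine Real.sqrt_le_sqrt ?_
  simpa [EuclideanSpace.norm_sq_eq] using A.sum_norm_mulVec_sq_le hR hrow hcol x.ofLp

lemma l2_opNorm_mul_mul_conjTranspose_le [Fintype m] [DecidableEq m] [DecidableEq n]
    (B : Matrix m n 𝕜) (X : Matrix n n 𝕜) :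
    ‖B * X * Bᴴ‖ ≤ ‖B‖ ^ 2 * ‖X‖ :=
  calc ‖B * X * Bᴴ‖ ≤ ‖B‖ * ‖X‖ * ‖Bᴴ‖ :=
        (l2_opNorm_mul _ _).trans (by gcongr; exact l2_opNorm_mul _ _)
    _ = ‖B‖ ^ 2 * ‖X‖ := by rw [l2_opNorm_conjTranspose]; ring

end L2OpNorm

section LowerBound

open scoped MatrixOrder

variable {m n 𝕜 : Type*} [Fintype n] [DecidableEq n] [RCLike 𝕜] {A : Matrix n n 𝕜} {μ : ℝ}

lemma IsHermitian.algebraMap_le_of_le_eigenvalues (hA : A.IsHermitian)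
    (h : ∀ i, μ ≤ hA.eigenvalues i) : algebraMap ℝ (Matrix n n 𝕜) μ ≤ A := by
  rw [algebraMap_le_iff_le_spectrum (ha := hA.isSelfAdjoint),
    hA.spectrum_real_eq_range_eigenvalues]
  rintro _ ⟨i, rfl⟩
  exact h i

lemma algebraMap_le_submatrix [Fintype m] [DecidableEq m]
    (h : algebraMap ℝ (Matrix n n 𝕜) μ ≤ A) {e : m → n} (he : Function.Injective e) :
    algebraMap ℝ (Matrix m m 𝕜) μ ≤ A.submatrix e e := by
  rw [le_iff] at h ⊢
  convert h.submatrix e using 1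
  ext i j
  simp [algebraMap_eq_diagonal, diagonal_apply, he.eq_iff]

lemma IsHermitian.l2_opNorm_inv_le {A : Matrix n n ℝ} (hA : A.IsHermitian) (hμ : 0 < μ)
    (h : algebraMap ℝ (Matrix n n ℝ) μ ≤ A) : ‖A⁻¹‖ ≤ μ⁻¹ := by
  have hspec : ∀ x ∈ spectrum ℝ A, μ ≤ x :=
    (algebraMap_le_iff_le_spectrum (ha := hA.isSelfAdjoint)).mp h
  have hunit : IsUnit A := spectrum.isUnit_of_zero_notMem ℝ fun h0 => (hspec 0 h0).not_gt hμ
  -- `A⁻¹ = cfc (·⁻¹) A`, and the functional calculus of matrices is isometric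
  rw [nonsing_inv_eq_ringInverse, ← cfc_ringInverse_id (R := ℝ) (a := A) hunit hA.isSelfAdjoint]
  refine norm_cfc_le (𝕜 := ℝ) (inv_nonneg.mpr hμ.le) fun x hx => ?_
  rw [Real.norm_eq_abs, abs_inv, abs_of_pos (hμ.trans_le (hspec x hx))]
  exact inv_anti₀ hμ (hspec x hx)

end LowerBound

section Band

variable {p s t m : ℕ} {Ω : Matrix (Fin p) (Fin p) ℝ} {K : ℝ}
  {r : Fin s → Fin p} {c : Fin t → Fin p}

lemma sum_abs_submatrix_apply_le_of_band
    (hband : ∀ j : Fin p,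
      ∑ i ∈ univ.filter (fun i : Fin p => (m : ℤ) ≤ |(i : ℤ) - (j : ℤ)|), |Ω i j| ≤ K)
    (hr : Function.Injective r)
    (hfar : ∀ a b, (m : ℤ) ≤ |((r a : ℕ) : ℤ) - ((c b : ℕ) : ℤ)|) (b : Fin t) :
    ∑ a, |Ω.submatrix r c a b| ≤ K :=
  (sum_comp_le_sum_filter_of_injective (fun i => abs_nonneg (Ω i (c b))) hr
    fun a => hfar a b).trans (hband (c b))

lemma l2_opNorm_submatrix_le_of_band (hΩ : Ωᵀ = Ω) (hK : 0 ≤ K)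
    (hband : ∀ j : Fin p,
      ∑ i ∈ univ.filter (fun i : Fin p => (m : ℤ) ≤ |(i : ℤ) - (j : ℤ)|), |Ω i j| ≤ K)
    (hr : Function.Injective r) (hc : Function.Injective c)
    (hfar : ∀ a b, (m : ℤ) ≤ |((r a : ℕ) : ℤ) - ((c b : ℕ) : ℤ)|) :
    ‖Ω.submatrix r c‖ ≤ K := by
  have hcol (b : Fin t) : ∑ a, ‖Ω.submatrix r c a b‖ ≤ K := by
    simpa only [Real.norm_eq_abs] using sum_abs_submatrix_apply_le_of_band hband hr hfar b
  have hrow (a : Fin s) : ∑ b, ‖Ω.submatrix r c a b‖ ≤ K := by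
    have hT : (Ω.submatrix r c)ᵀ = Ω.submatrix c r := by rw [transpose_submatrix, hΩ]
    have hfar' (b : Fin t) (a : Fin s) : (m : ℤ) ≤ |((c b : ℕ) : ℤ) - ((r a : ℕ) : ℤ)| := by
      rw [abs_sub_comm]
      exact hfar a b
    simpa only [← hT, transpose_apply, Real.norm_eq_abs] using
      sum_abs_submatrix_apply_le_of_band hband hc hfar' a
  simpa only [Real.sqrt_mul_self hK] using l2_opNorm_le_sqrt_of_sum_norm_le _ hK hrow hcol

end Band

end Matrix

theorem correction_term_bound_general (p s t m : ℕ) (hm : 0 < m)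
    (Ω : Matrix (Fin p) (Fin p) ℝ) (hpd : Ω.PosDef)
    (M M₀ α : ℝ) (hM : 0 < M) (hM₀ : 0 < M₀)
    (hmin : ∀ i : Fin p, 1 / M₀ ≤ hpd.1.eigenvalues i)
    (hband : ∀ m' : ℕ, 0 < m' → ∀ j : Fin p,
      ∑ i ∈ univ.filter (fun i : Fin p => (m' : ℤ) ≤ |(i : ℤ) - (j : ℤ)|), |Ω i j|
        ≤ M * (m' : ℝ) ^ (-α))
    (r : Fin s → Fin p) (c : Fin t → Fin p)
    (hr : Function.Injective r) (hc : Function.Injective c)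
    (hfar : ∀ (a : Fin s) (b : Fin t), (m : ℤ) ≤ |((r a : ℕ) : ℤ) - ((c b : ℕ) : ℤ)|) :
    specNorm (Ω.submatrix r c * (Ω.submatrix c c)⁻¹ * (Ω.submatrix r c)ᵀ)
      ≤ M ^ 2 * M₀ * (m : ℝ) ^ (-(2 * α)) := by
  have hB : ‖Ω.submatrix r c‖ ≤ M * (m : ℝ) ^ (-α) :=
    l2_opNorm_submatrix_le_of_band (by simpa using hpd.1.eq) (by positivity) (hband m hm)
      hr hc hfar
  have hCinv : ‖(Ω.submatrix c c)⁻¹‖ ≤ M₀ := by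
    simpa using (hpd.1.submatrix c).l2_opNorm_inv_le (one_div_pos.mpr hM₀)
      (algebraMap_le_submatrix (hpd.1.algebraMap_le_of_le_eigenvalues hmin) hc)
  calc specNorm (Ω.submatrix r c * (Ω.submatrix c c)⁻¹ * (Ω.submatrix r c)ᵀ)
      = ‖Ω.submatrix r c * (Ω.submatrix c c)⁻¹ * (Ω.submatrix r c)ᴴ‖ := rfl
    _ ≤ ‖Ω.submatrix r c‖ ^ 2 * ‖(Ω.submatrix c c)⁻¹‖ := l2_opNorm_mul_mul_conjTranspose_le _ _
    _ ≤ (M * (m : ℝ) ^ (-α)) ^ 2 * M₀ := by gcongr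
    _ = M ^ 2 * M₀ * (m : ℝ) ^ (-(2 * α)) := by
      rw [mul_pow, ← Real.rpow_mul_natCast (Nat.cast_nonneg m)]
      ring_nf

/-- Let `Ω` be symmetric positive definite with smallest eigenvalue at least `1/M₀`,
satisfying the bandability condition. If `B₂ = Ω.submatrix r c` is a submatrix of `Ω`
all of whose entries satisfy `|i - j| ≥ m`, and `C = Ω.submatrix c c` is the
corresponding principal submatrix, then the correction `W = B₂ C⁻¹ B₂ᵀ` satisfies
`‖W‖ ≤ M² M₀ m^{-2α}`. -/
theorem correction_term_bound (p s t m : ℕ) (hm : 0 < m)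
    (Ω : Matrix (Fin p) (Fin p) ℝ) (hpd : Ω.PosDef)
    (M M₀ α : ℝ) (hM : 0 < M) (hM₀ : 0 < M₀) (hα : 0 < α)
    (hmin : ∀ i : Fin p, 1 / M₀ ≤ hpd.1.eigenvalues i)
    (hband : ∀ m' : ℕ, 0 < m' → ∀ j : Fin p,
      ∑ i ∈ univ.filter (fun i : Fin p => (m' : ℤ) ≤ |(i : ℤ) - (j : ℤ)|), |Ω i j|
        ≤ M * (m' : ℝ) ^ (-α))
    (r : Fin s → Fin p) (c : Fin t → Fin p)
    (hr : Function.Injective r) (hc : Function.Injective c)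
    (hfar : ∀ (a : Fin s) (b : Fin t), (m : ℤ) ≤ |((r a : ℕ) : ℤ) - ((c b : ℕ) : ℤ)|) :
    specNorm (Ω.submatrix r c * (Ω.submatrix c c)⁻¹ * (Ω.submatrix r c)ᵀ)
      ≤ M ^ 2 * M₀ * (m : ℝ) ^ (-(2 * α)) :=
  correction_term_bound_general p s t m hm Ω hpd M M₀ α hM hM₀ hmin hband r c hr hc hfar
end

section
/- Let θ, θ' ∈ {0,1}^k with Hamming distance H(θ,θ') ≥ 1, and let Ω(θ) = I_p + τa Σ_{m=1}^k θ_m B(m,k), where B(m,k) is the p×p 0/1 matrix with b_{ij} = 1 iff (i = m and m+1 ≤ j ≤ 2k) or (j = m and m+1 ≤ i ≤ 2k), with 2k ≤ p, a > 0, τ > 0. Then ‖Ω(θ) − Ω(θ')‖² ≥ H(θ,θ')·τ²·k·a², and hence ‖Ω(θ) − Ω(θ')‖²/H(θ,θ') ≥ τ²ka². -/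
open Finset
open Matrix

/-- The matrix `B(m, k)` (1-based indices): `b_{ij} = 1` iff
(`i = m` and `m+1 ≤ j ≤ 2k`) or (`j = m` and `m+1 ≤ i ≤ 2k`). -/
def Bmat (p k : ℕ) (m : Fin k) : Matrix (Fin p) (Fin p) ℝ :=
  Matrix.of fun i j =>
    if ((i : ℕ) + 1 = (m : ℕ) + 1 ∧ (m : ℕ) + 2 ≤ (j : ℕ) + 1 ∧ (j : ℕ) + 1 ≤ 2 * k)
      ∨ ((j : ℕ) + 1 = (m : ℕ) + 1 ∧ (m : ℕ) + 2 ≤ (i : ℕ) + 1 ∧ (i : ℕ) + 1 ≤ 2 * k)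
    then (1 : ℝ) else 0

/-- For `θ, θ' ∈ {0,1}^k` with Hamming distance `H(θ,θ') ≥ 1` and
`Ω(θ) = I + τa Σₘ θₘ B(m,k)` with `2k ≤ p`, `a, τ > 0`, one has
`‖Ω(θ) − Ω(θ')‖² ≥ H(θ,θ') τ² k a²`, hence `‖Ω(θ) − Ω(θ')‖²/H(θ,θ') ≥ τ² k a²`. -/
theorem assouad_separation (p k : ℕ) (hkp : 2 * k ≤ p) (τ a : ℝ) (hτ : 0 < τ) (ha : 0 < a)
    (θ θ' : Fin k → ℝ)
    (hθ : ∀ i, θ i = 0 ∨ θ i = 1) (hθ' : ∀ i, θ' i = 0 ∨ θ' i = 1)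
    (hH : 1 ≤ (univ.filter fun i => θ i ≠ θ' i).card) :
    specNorm (((1 : Matrix (Fin p) (Fin p) ℝ) + (τ * a) • ∑ m, θ m • Bmat p k m)
        - ((1 : Matrix (Fin p) (Fin p) ℝ) + (τ * a) • ∑ m, θ' m • Bmat p k m)) ^ 2
      ≥ ((univ.filter fun i => θ i ≠ θ' i).card : ℝ) * τ ^ 2 * k * a ^ 2
    ∧ specNorm (((1 : Matrix (Fin p) (Fin p) ℝ) + (τ * a) • ∑ m, θ m • Bmat p k m)
        - ((1 : Matrix (Fin p) (Fin p) ℝ) + (τ * a) • ∑ m, θ' m • Bmat p k m)) ^ 2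
        / ((univ.filter fun i => θ i ≠ θ' i).card : ℝ)
      ≥ τ ^ 2 * k * a ^ 2 := by
  classical
  obtain ⟨m0, -⟩ := Finset.card_pos.mp hH
  have hk : 0 < k := m0.pos
  set D : Matrix (Fin p) (Fin p) ℝ :=
    ((1 : Matrix (Fin p) (Fin p) ℝ) + (τ * a) • ∑ m, θ m • Bmat p k m)
      - ((1 : Matrix (Fin p) (Fin p) ℝ) + (τ * a) • ∑ m, θ' m • Bmat p k m) with hDdef
  have hDmat : D = (τ * a) • ∑ m, (θ m - θ' m) • Bmat p k m := by
    rw [hDdef, add_sub_add_left_eq_sub, ← smul_sub, ← Finset.sum_sub_distrib]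
    congr 1
    apply Finset.sum_congr rfl
    intro m _
    rw [sub_smul]
  set w : Fin p → ℝ := fun j => if k ≤ (j : ℕ) ∧ (j : ℕ) < 2 * k then 1 else 0 with hwdef
  set v : EuclideanSpace ℝ (Fin p) := (WithLp.equiv 2 (Fin p → ℝ)).symm w with hvdef
  -- the indicator sum
  have hsum : ∑ j : Fin p, (if k ≤ (j : ℕ) ∧ (j : ℕ) < 2 * k then (1 : ℝ) else 0) = k := by
    rw [Finset.sum_boole]
    norm_cast
    rw [Finset.card_filter,
      Fin.sum_univ_eq_sum_range (fun t => if k ≤ t ∧ t < 2 * k then 1 else 0),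
      ← Finset.card_filter]
    have : (Finset.range p).filter (fun t => k ≤ t ∧ t < 2 * k) = Finset.Ico k (2 * k) := by
      ext t; simp [Finset.mem_Ico]; omega
    rw [this, Nat.card_Ico]
    omega
  -- inner sums
  have key : ∀ (i : Fin p), (i : ℕ) < k → ∀ m : Fin k,
      ∑ j : Fin p, Bmat p k m i j * w j = if (m : ℕ) = (i : ℕ) then (k : ℝ) else 0 := by
    intro i hi m
    have hmk := m.isLt
    by_cases hm : (m : ℕ) = (i : ℕ)
    · rw [if_pos hm]
      have hterm : ∀ j : Fin p, Bmat p k m i j * w j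
          = if k ≤ (j : ℕ) ∧ (j : ℕ) < 2 * k then (1 : ℝ) else 0 := by
        intro j
        simp only [Bmat, Matrix.of_apply, hwdef]
        by_cases hj : k ≤ (j : ℕ) ∧ (j : ℕ) < 2 * k
        · obtain ⟨hj1, hj2⟩ := hj
          have hb : ((i : ℕ) + 1 = (m : ℕ) + 1 ∧ (m : ℕ) + 2 ≤ (j : ℕ) + 1 ∧ (j : ℕ) + 1 ≤ 2 * k)
              ∨ ((j : ℕ) + 1 = (m : ℕ) + 1 ∧ (m : ℕ) + 2 ≤ (i : ℕ) + 1 ∧ (i : ℕ) + 1 ≤ 2 * k) :=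
            Or.inl (by omega)
          rw [if_pos hb, if_pos (⟨hj1, hj2⟩ : k ≤ (j : ℕ) ∧ (j : ℕ) < 2 * k), mul_one]
        · rw [if_neg hj, mul_zero]
      rw [Finset.sum_congr rfl (fun j _ => hterm j), hsum]
    · rw [if_neg hm]
      apply Finset.sum_eq_zero
      intro j _
      simp only [Bmat, Matrix.of_apply, hwdef]
      by_cases hj : k ≤ (j : ℕ) ∧ (j : ℕ) < 2 * k
      · obtain ⟨hj1, hj2⟩ := hj
        have hb : ¬(((i : ℕ) + 1 = (m : ℕ) + 1 ∧ (m : ℕ) + 2 ≤ (j : ℕ) + 1 ∧ (j : ℕ) + 1 ≤ 2 * k)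
            ∨ ((j : ℕ) + 1 = (m : ℕ) + 1 ∧ (m : ℕ) + 2 ≤ (i : ℕ) + 1 ∧ (i : ℕ) + 1 ≤ 2 * k)) := by
          omega
        rw [if_neg hb, zero_mul]
      · rw [if_neg hj, mul_zero]
  -- rows of D *ᵥ w
  have hrow : ∀ (i : Fin p) (hi : (i : ℕ) < k),
      (D *ᵥ w) i = (τ * a) * ((θ ⟨(i : ℕ), hi⟩ - θ' ⟨(i : ℕ), hi⟩) * k) := by
    intro i hi
    rw [hDmat]
    simp only [Matrix.mulVec, dotProduct, Matrix.smul_apply, Matrix.sum_apply,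
      smul_eq_mul]
    calc ∑ j : Fin p, (τ * a * ∑ m : Fin k, (θ m - θ' m) * Bmat p k m i j) * w j
        = τ * a * ∑ m : Fin k, (θ m - θ' m) * ∑ j : Fin p, Bmat p k m i j * w j := by
          simp only [Finset.sum_mul, Finset.mul_sum]
          rw [Finset.sum_comm]
          exact Finset.sum_congr rfl fun m _ => Finset.sum_congr rfl fun j _ => by ring
      _ = τ * a * ∑ m : Fin k, (θ m - θ' m) * (if (m : ℕ) = (i : ℕ) then (k : ℝ) else 0) := by
          exact congrArg _ (Finset.sum_congr rfl fun m _ => by rw [key i hi m])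
      _ = τ * a * ((θ ⟨(i : ℕ), hi⟩ - θ' ⟨(i : ℕ), hi⟩) * k) := by
          congr 1
          rw [Finset.sum_eq_single (⟨(i : ℕ), hi⟩ : Fin k)]
          · simp
          · intro m _ hne
            have : (m : ℕ) ≠ (i : ℕ) := fun h => hne (Fin.ext h)
            simp [this]
          · intro h; exact absurd (Finset.mem_univ _) h
  -- norm of v
  have hvnorm : ‖v‖ ^ 2 = (k : ℝ) := by
    rw [EuclideanSpace.norm_eq, Real.sq_sqrt (by positivity)]
    have hterm : ∀ i : Fin p, ‖((WithLp.equiv 2 (Fin p → ℝ)).symm w) i‖ ^ 2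
        = (if k ≤ (i : ℕ) ∧ (i : ℕ) < 2 * k then (1 : ℝ) else 0) := by
      intro i
      have h0 : ((WithLp.equiv 2 (Fin p → ℝ)).symm w) i = w i := rfl
      rw [h0, hwdef]
      by_cases hc : k ≤ (i : ℕ) ∧ (i : ℕ) < 2 * k <;> simp [hc]
    rw [hvdef, Finset.sum_congr rfl (fun i _ => hterm i), hsum]
  set T := LinearMap.toContinuousLinearMap (Matrix.toEuclideanLin D) with hTdef
  have hTv : ∀ i : Fin p, (T v) i = (D *ᵥ w) i := fun i => rfl
  set H : ℕ := (univ.filter fun i => θ i ≠ θ' i).card with hHdef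
  -- lower bound on ‖T v‖²
  have hTvnorm : (H : ℝ) * (τ * a * k) ^ 2 ≤ ‖T v‖ ^ 2 := by
    rw [EuclideanSpace.norm_eq, Real.sq_sqrt (by positivity)]
    have hkle : k ≤ p := by omega
    set S : Finset (Fin p) :=
      (univ.filter fun i => θ i ≠ θ' i).map ⟨Fin.castLE hkle, Fin.castLE_injective hkle⟩
      with hSdef
    have hstep : (H : ℝ) * (τ * a * k) ^ 2 = ∑ i ∈ S, ‖(T v) i‖ ^ 2 := by
      rw [hSdef, Finset.sum_map]
      simp only [Function.Embedding.coeFn_mk]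
      have hterm : ∀ m ∈ (univ.filter fun i => θ i ≠ θ' i),
          ‖(T v) (Fin.castLE hkle m)‖ ^ 2 = (τ * a * k) ^ 2 := by
        intro m hm
        rw [Finset.mem_filter] at hm
        have hlt : ((Fin.castLE hkle m : Fin p) : ℕ) < k := m.isLt
        rw [hTv, hrow _ hlt]
        have hback : (⟨((Fin.castLE hkle m : Fin p) : ℕ), hlt⟩ : Fin k) = m := Fin.ext rfl
        rw [hback]
        have hd : (θ m - θ' m) ^ 2 = 1 := by
          rcases hθ m with h1 | h1 <;> rcases hθ' m with h2 | h2
          · exact absurd (h1.trans h2.symm) hm.2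
          · rw [h1, h2]; norm_num
          · rw [h1, h2]; norm_num
          · exact absurd (h1.trans h2.symm) hm.2
        rw [Real.norm_eq_abs, sq_abs]
        nlinarith [hd]
      rw [Finset.sum_congr rfl hterm, Finset.sum_const, nsmul_eq_mul, hHdef]
    rw [hstep]
    exact Finset.sum_le_sum_of_subset_of_nonneg (Finset.subset_univ S)
      (fun i _ _ => by positivity)
  have hop : ‖T v‖ ≤ specNorm D * ‖v‖ := T.le_opNorm v
  have hN0 : 0 ≤ specNorm D := norm_nonneg T
  have hsq : ‖T v‖ ^ 2 ≤ specNorm D ^ 2 * ‖v‖ ^ 2 := by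
    rw [← mul_pow]
    exact pow_le_pow_left₀ (norm_nonneg _) hop 2
  have hkR : (0 : ℝ) < k := by exact_mod_cast hk
  have hHR : (1 : ℝ) ≤ (H : ℝ) := by exact_mod_cast hH
  have hmain : specNorm D ^ 2 ≥ (H : ℝ) * τ ^ 2 * k * a ^ 2 := by
    have h2 : ((H : ℝ) * τ ^ 2 * k * a ^ 2) * k ≤ specNorm D ^ 2 * k :=
      calc ((H : ℝ) * τ ^ 2 * k * a ^ 2) * k = (H : ℝ) * (τ * a * k) ^ 2 := by ring
        _ ≤ ‖T v‖ ^ 2 := hTvnorm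
        _ ≤ specNorm D ^ 2 * k := by rw [← hvnorm]; exact hsq
    exact le_of_mul_le_mul_right h2 hkR
  refine ⟨hmain, ?_⟩
  rw [ge_iff_le, le_div_iff₀ (by linarith : (0 : ℝ) < (H : ℝ))]
  calc τ ^ 2 * k * a ^ 2 * H = (H : ℝ) * τ ^ 2 * k * a ^ 2 := by ring
    _ ≤ specNorm D ^ 2 := hmain
end
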